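/- An order H in a definite rational quaternion division algebra A is a left principal ideal domain if and only if for every ρ ∈ A \ H there exist α, β ∈ H with 0 < N(αρ − β) < 1. (Dedekind–Hasse criterion for quaternion orders.) -/

import Mathlib

open Quaternion

/-- Reduced norm on the definite quaternion algebra `(−a,−b / ℚ)`. -/
def qN (a b : ℚ) (x : ℍ[ℚ, -a, -b]) : ℚ := (x * star x).re

/-- `H` is an order: finitely generated as an additive group, and a full lattice. -/
def IsOrder (a b : ℚ) (H : Subring ℍ[ℚ, -a, -b]) : Prop :=
  H.toAddSubgroup.FG ∧
    ∀ x : ℍ[ℚ, -a, -b], ∃ n : ℕ, 0 < n ∧ (n : ℍ[ℚ, -a, -b]) * x ∈ H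

/-- `H` is a left principal ideal domain: every left ideal is principal. -/
def IsLeftPID (a b : ℚ) (H : Subring ℍ[ℚ, -a, -b]) : Prop :=
  ∀ I : Set ℍ[ℚ, -a, -b],
    (I ⊆ H ∧ (0 : ℍ[ℚ, -a, -b]) ∈ I ∧ (∀ x ∈ I, ∀ y ∈ I, x + y ∈ I) ∧
      (∀ h ∈ H, ∀ x ∈ I, h * x ∈ I)) →
    ∃ γ ∈ H, I = {x | ∃ h ∈ H, x = h * γ}

/-!
Elements of an order are integral over `ℤ`, so their reduced trace and norm are integers; in
particular `H` is stable under conjugation and the reduced norm `N = qN a b` is `ℕ`-valued on `H`.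

If the Dedekind–Hasse condition holds, a nonzero left ideal `I` is generated by an element `γ` of
least norm: were `ρ = x γ⁻¹ ∉ H` for some `x ∈ I`, then `(α ρ - β) γ = α x - β γ ∈ I` would have
smaller positive norm.

Conversely, let `H` be a left PID and `ρ ∉ H`. Pick `n` with `n ρ ∈ H` and write
`H n ρ + H n = H γ`, so that `n = h γ`, `n ρ = k γ` and `γ = n (α ρ + β)` with `h, k, α, β ∈ H`.
Then `N(α ρ + β) = 1 / N(h)`, and `N(h) ≠ 1`: otherwise `star h` is an inverse of `h` in `H`
and `ρ = k (star h) ∈ H`.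
-/

open Polynomial

theorem minpoly_mem_lifts_of_isIntegral {R K A : Type*} [CommRing R] [IsDomain R]
    [IsIntegrallyClosed R] [Field K] [Algebra R K] [IsFractionRing R K] [Ring A] [Algebra K A]
    [Algebra R A] [IsScalarTower R K A] {x : A} (hx : IsIntegral R x) :
    minpoly K x ∈ lifts (algebraMap R K) := by
  obtain ⟨q, hq, hqx⟩ := hx
  have hdvd : minpoly K x ∣ q.map (algebraMap R K) :=
    minpoly.dvd K x (by rwa [aeval_map_algebraMap])
  obtain ⟨g, hg⟩ := IsIntegrallyClosed.eq_map_mul_C_of_dvd K hq hdvd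
  rw [(minpoly.monic (IsIntegral.tower_top ⟨q, hq, hqx⟩)).leadingCoeff, C_1, mul_one] at hg
  exact ⟨g, hg⟩

namespace QuaternionAlgebra

variable {K : Type*} [Field K] {c₁ c₂ c₃ : K}

theorem coe_re_self_add_star (x : ℍ[K,c₁,c₂,c₃]) :
    (((x + star x).re : K) : ℍ[K,c₁,c₂,c₃]) = x + star x := by
  rw [self_add_star']; simp

theorem minpoly_eq_of_notMem_range {x : ℍ[K,c₁,c₂,c₃]} (hx : x ∉ (algebraMap K _).range) :
    minpoly K x = X ^ 2 - C (x + star x).re * X + C (x * star x).re := by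
  have hdeg : (X ^ 2 - C (x + star x).re * X + C (x * star x).re : K[X]).natDegree = 2 := by
    compute_degree!
  have hmonic : (X ^ 2 - C (x + star x).re * X + C (x * star x).re : K[X]).Monic := by
    monicity!
  refine (minpoly.unique K x hmonic ?_ fun q hq hqx => ?_).symm
  · simp only [map_add, map_sub, map_mul, map_pow, aeval_X, aeval_C]
    change x ^ 2 - ((x + star x).re : ℍ[K,c₁,c₂,c₃]) * x + ((x * star x).re : ℍ[K,c₁,c₂,c₃]) = 0
    rw [coe_re_self_add_star, ← mul_star_eq_coe, ← star_comm_self' x]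
    noncomm_ring
  · have hint : IsIntegral K x := Algebra.IsIntegral.isIntegral x
    rw [degree_eq_natDegree hmonic.ne_zero, hdeg]
    calc ((2 : ℕ) : WithBot ℕ) ≤ (minpoly K x).natDegree := by
          exact_mod_cast (minpoly.two_le_natDegree_iff hint).mpr hx
      _ = (minpoly K x).degree := (degree_eq_natDegree (minpoly.ne_zero hint)).symm
      _ ≤ q.degree := minpoly.min K x hq hqx

theorem re_add_star_and_re_mul_star_mem_range_of_isIntegral {R : Type*} [CommRing R] [IsDomain R]
    [IsIntegrallyClosed R] [Algebra R K] [IsFractionRing R K] {x : ℍ[K,c₁,c₂,c₃]}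
    (hx : IsIntegral R x) :
    (x + star x).re ∈ (algebraMap R K).range ∧ (x * star x).re ∈ (algebraMap R K).range := by
  have hlifts := (lifts_iff_coeff_lifts _).mp (minpoly_mem_lifts_of_isIntegral (K := K) hx)
  by_cases hK : x ∈ (algebraMap K _).range
  · obtain ⟨c, rfl⟩ := hK
    obtain ⟨r, hr⟩ := hlifts 0
    rw [minpoly.eq_X_sub_C, coeff_sub, coeff_X_zero, coeff_C_zero, zero_sub] at hr
    change ((c : ℍ[K,c₁,c₂,c₃]) + star (c : ℍ[K,c₁,c₂,c₃])).re ∈ _ ∧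
      ((c : ℍ[K,c₁,c₂,c₃]) * star (c : ℍ[K,c₁,c₂,c₃])).re ∈ _
    rw [star_coe, ← coe_add, ← coe_mul, re_coe, re_coe]
    exact ⟨⟨-(r + r), by simp [hr]⟩, ⟨r * r, by rw [map_mul, hr, neg_mul_neg]⟩⟩
  · rw [minpoly_eq_of_notMem_range hK] at hlifts
    obtain ⟨t, ht⟩ := hlifts 1
    obtain ⟨n, hn⟩ := hlifts 0
    simp only [coeff_add, coeff_sub, coeff_X_pow, coeff_C_mul_X, coeff_C, if_true, if_false,
      Nat.reduceEqDiff, zero_sub, add_zero, sub_zero, zero_add] at ht hn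
    exact ⟨⟨-t, by simp [ht]⟩, ⟨n, hn⟩⟩

end QuaternionAlgebra

variable {a b : ℚ}

theorem qN_def' (x : ℍ[ℚ, -a, -b]) :
    qN a b x = x.re ^ 2 + a * x.imI ^ 2 + b * x.imJ ^ 2 + a * b * x.imK ^ 2 := by
  simp only [qN, QuaternionAlgebra.re_mul, QuaternionAlgebra.re_star, QuaternionAlgebra.imI_star,
    QuaternionAlgebra.imJ_star, QuaternionAlgebra.imK_star]
  ring

theorem coe_qN_eq_star_mul (x : ℍ[ℚ, -a, -b]) : (qN a b x : ℍ[ℚ, -a, -b]) = star x * x := by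
  rw [star_comm_self', qN, ← QuaternionAlgebra.mul_star_eq_coe]

theorem qN_mul (x y : ℍ[ℚ, -a, -b]) : qN a b (x * y) = qN a b x * qN a b y := by
  simp only [qN_def', QuaternionAlgebra.re_mul, QuaternionAlgebra.imI_mul,
    QuaternionAlgebra.imJ_mul, QuaternionAlgebra.imK_mul]
  ring

theorem qN_natCast (n : ℕ) : qN a b n = (n : ℚ) ^ 2 := by
  simp [qN_def']

theorem qN_nonneg (ha : 0 < a) (hb : 0 < b) (x : ℍ[ℚ, -a, -b]) : 0 ≤ qN a b x := by
  rw [qN_def']; positivity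

theorem qN_pos (ha : 0 < a) (hb : 0 < b) {x : ℍ[ℚ, -a, -b]} (hx : x ≠ 0) : 0 < qN a b x := by
  refine (qN_nonneg ha hb x).lt_of_ne' fun h0 => hx ?_
  rw [qN_def'] at h0
  have hab := mul_pos ha hb
  have := sq_nonneg x.re
  have := mul_nonneg ha.le (sq_nonneg x.imI)
  have := mul_nonneg hb.le (sq_nonneg x.imJ)
  have := mul_nonneg hab.le (sq_nonneg x.imK)
  ext <;> apply pow_eq_zero_iff two_ne_zero |>.mp
  · linarith
  · exact (mul_eq_zero.mp (by linarith)).resolve_left ha.ne'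
  · exact (mul_eq_zero.mp (by linarith)).resolve_left hb.ne'
  · exact (mul_eq_zero.mp (by linarith)).resolve_left hab.ne'

theorem star_mul_mul_of_qN_eq_one {h : ℍ[ℚ, -a, -b]} (hh : qN a b h = 1) (y : ℍ[ℚ, -a, -b]) :
    star h * (h * y) = y := by
  rw [← mul_assoc, ← coe_qN_eq_star_mul, hh, QuaternionAlgebra.coe_one, one_mul]

theorem mul_qN_inv_smul_star_mul (ha : 0 < a) (hb : 0 < b) {γ : ℍ[ℚ, -a, -b]} (hγ : γ ≠ 0)
    (x : ℍ[ℚ, -a, -b]) : x * ((qN a b γ)⁻¹ • star γ) * γ = x := by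
  rw [mul_assoc, smul_mul_assoc, ← coe_qN_eq_star_mul, ← QuaternionAlgebra.coe_mul_eq_smul,
    ← QuaternionAlgebra.coe_mul, inv_mul_cancel₀ (qN_pos ha hb hγ).ne', QuaternionAlgebra.coe_one,
    mul_one]

namespace IsOrder

variable {H : Subring ℍ[ℚ, -a, -b]} (hH : IsOrder a b H)
include hH

theorem isIntegral {x : ℍ[ℚ, -a, -b]} (hx : x ∈ H) : IsIntegral ℤ x :=
  IsIntegral.of_mem_of_fg (subalgebraOfSubring H)
    ((Submodule.fg_iff_addSubgroup_fg _).mpr hH.1) x hx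

theorem star_mem {x : ℍ[ℚ, -a, -b]} (hx : x ∈ H) : star x ∈ H := by
  obtain ⟨t, ht⟩ :=
    (QuaternionAlgebra.re_add_star_and_re_mul_star_mem_range_of_isIntegral (hH.isIntegral hx)).1
  have hstar : star x = (((x + star x).re : ℚ) : ℍ[ℚ, -a, -b]) - x := by
    rw [QuaternionAlgebra.coe_re_self_add_star, add_sub_cancel_left]
  rw [hstar, ← ht, algebraMap_int_eq, eq_intCast, QuaternionAlgebra.coe_intCast]
  exact sub_mem (intCast_mem H t) hx

theorem exists_qN_eq_natCast (ha : 0 < a) (hb : 0 < b) {x : ℍ[ℚ, -a, -b]} (hx : x ∈ H) :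
    ∃ n : ℕ, qN a b x = n := by
  obtain ⟨n, hn⟩ :=
    (QuaternionAlgebra.re_add_star_and_re_mul_star_mem_range_of_isIntegral (hH.isIntegral hx)).2
  have hn0 : 0 ≤ n := by
    have := qN_nonneg ha hb x
    rw [qN, ← hn, algebraMap_int_eq, eq_intCast] at this
    exact_mod_cast this
  lift n to ℕ using hn0
  exact ⟨n, by rw [qN, ← hn, algebraMap_int_eq, eq_intCast, Int.cast_natCast]⟩

end IsOrder

theorem natCast_mul_left_cancel {A : Type*} [Ring A] [Algebra ℚ A] {n : ℕ} (hn : n ≠ 0)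
    {x y : A} (h : (n : A) * x = n * y) : x = y := by
  have hunit : IsUnit (n : A) := by
    simpa using (IsUnit.mk0 (n : ℚ) (Nat.cast_ne_zero.mpr hn)).map (algebraMap ℚ A)
  exact hunit.mul_left_cancel h

section LeftIdeal

variable {A : Type*} [Ring A] (H : Subring A)

def IsLeftIdeal (I : Set A) : Prop :=
  I ⊆ H ∧ (0 : A) ∈ I ∧ (∀ x ∈ I, ∀ y ∈ I, x + y ∈ I) ∧ (∀ h ∈ H, ∀ x ∈ I, h * x ∈ I)

theorem isLeftIdeal_span_pair {u v : A} (hu : u ∈ H) (hv : v ∈ H) :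
    IsLeftIdeal H {x | ∃ h₁ ∈ H, ∃ h₂ ∈ H, x = h₁ * u + h₂ * v} := by
  refine ⟨?_, ⟨0, zero_mem H, 0, zero_mem H, by simp⟩, ?_, ?_⟩
  · rintro x ⟨h₁, hh₁, h₂, hh₂, rfl⟩
    exact add_mem (mul_mem hh₁ hu) (mul_mem hh₂ hv)
  · rintro x ⟨h₁, hh₁, h₂, hh₂, rfl⟩ y ⟨k₁, hk₁, k₂, hk₂, rfl⟩
    exact ⟨h₁ + k₁, add_mem hh₁ hk₁, h₂ + k₂, add_mem hh₂ hk₂, by noncomm_ring⟩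
  · rintro h hh x ⟨h₁, hh₁, h₂, hh₂, rfl⟩
    exact ⟨h * h₁, mul_mem hh hh₁, h * h₂, mul_mem hh hh₂, by noncomm_ring⟩

end LeftIdeal

def SatisfiesDedekindHasse (a b : ℚ) (H : Subring ℍ[ℚ, -a, -b]) : Prop :=
  ∀ ρ : ℍ[ℚ, -a, -b], ρ ∉ H →
    ∃ α ∈ H, ∃ β ∈ H, 0 < qN a b (α * ρ - β) ∧ qN a b (α * ρ - β) < 1

section DedekindHasse

variable {H : Subring ℍ[ℚ, -a, -b]} (ha : 0 < a) (hb : 0 < b)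
include ha hb

theorem exists_qN_lt_of_satisfiesDedekindHasse (hDH : SatisfiesDedekindHasse a b H)
    {I : Set ℍ[ℚ, -a, -b]} (hI : IsLeftIdeal H I) {γ x : ℍ[ℚ, -a, -b]} (hγI : γ ∈ I)
    (hγ : γ ≠ 0) (hxI : x ∈ I) (hx : ∀ h ∈ H, x ≠ h * γ) :
    ∃ y ∈ I, 0 < qN a b y ∧ qN a b y < qN a b γ := by
  obtain ⟨-, -, hIadd, hImul⟩ := hI
  set ρ := x * ((qN a b γ)⁻¹ • star γ)
  have hργ : ρ * γ = x := mul_qN_inv_smul_star_mul ha hb hγ x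
  obtain ⟨α, hα, β, hβ, hpos, hlt⟩ := hDH ρ fun hρ => hx ρ hρ hργ.symm
  have hy : α * x + -β * γ = (α * ρ - β) * γ := by rw [← hργ]; noncomm_ring
  refine ⟨α * x + -β * γ, hIadd _ (hImul α hα x hxI) _ (hImul _ (neg_mem hβ) γ hγI), ?_⟩
  have hγpos := qN_pos ha hb hγ
  rw [hy, qN_mul]
  exact ⟨mul_pos hpos hγpos, mul_lt_of_lt_one_left hγpos hlt⟩

theorem isLeftPID_of_satisfiesDedekindHasse (hH : IsOrder a b H)
    (hDH : SatisfiesDedekindHasse a b H) : IsLeftPID a b H := by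
  intro I hI
  obtain ⟨hIH, hI0, -, hImul⟩ := id hI
  by_cases hz : ∃ x ∈ I, x ≠ 0
  · classical
    have hex : ∃ n : ℕ, ∃ γ ∈ I, γ ≠ 0 ∧ qN a b γ = n := by
      obtain ⟨x, hxI, hx⟩ := hz
      obtain ⟨n, hn⟩ := hH.exists_qN_eq_natCast ha hb (hIH hxI)
      exact ⟨n, x, hxI, hx, hn⟩
    obtain ⟨γ, hγI, hγ, hγn⟩ := Nat.find_spec hex
    refine ⟨γ, hIH hγI, Set.ext fun x => ⟨fun hxI => ?_, ?_⟩⟩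
    · by_contra hx
      obtain ⟨y, hyI, hypos, hylt⟩ := exists_qN_lt_of_satisfiesDedekindHasse ha hb hDH hI hγI hγ
        hxI fun h hh hxh => hx ⟨h, hh, hxh⟩
      obtain ⟨m, hm⟩ := hH.exists_qN_eq_natCast ha hb (hIH hyI)
      have hy : y ≠ 0 := by rintro rfl; simp [qN] at hypos
      have hmin := Nat.find_min' hex ⟨y, hyI, hy, hm⟩
      rw [hγn, hm] at hylt
      exact absurd hmin (by exact_mod_cast hylt.not_ge)
    · rintro ⟨h, hh, rfl⟩
      exact hImul h hh γ hγI
  · push Not at hz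
    refine ⟨0, zero_mem H, Set.ext fun x => ⟨fun hx => ?_, ?_⟩⟩
    · exact ⟨0, zero_mem H, by rw [hz x hx, mul_zero]⟩
    · rintro ⟨h, -, rfl⟩
      rwa [mul_zero]

theorem satisfiesDedekindHasse_of_isLeftPID (hH : IsOrder a b H) (hPID : IsLeftPID a b H) :
    SatisfiesDedekindHasse a b H := by
  intro ρ hρ
  obtain ⟨n, hn, hnρ⟩ := hH.2 ρ
  obtain ⟨γ, -, hI⟩ := hPID _ (isLeftIdeal_span_pair H hnρ (natCast_mem H n))
  have hmem := Set.ext_iff.mp hI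
  obtain ⟨h, hh, hnγ⟩ := (hmem n).mp ⟨0, zero_mem H, 1, one_mem H, by simp⟩
  obtain ⟨k, hk, hnργ⟩ := (hmem (n * ρ)).mp ⟨1, one_mem H, 0, zero_mem H, by simp⟩
  obtain ⟨α, hα, β, hβ, hγ⟩ := (hmem γ).mpr ⟨1, one_mem H, (one_mul γ).symm⟩
  have hγ' : γ = n * (α * ρ - -β) := by
    rw [hγ, sub_neg_eq_add, mul_add, ← mul_assoc, ← mul_assoc, Nat.cast_comm, Nat.cast_comm n β]
  have hnorm : qN a b (α * ρ - -β) * qN a b h = 1 := by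
    have := congrArg (qN a b) hnγ
    rw [qN_natCast, qN_mul, hγ', qN_mul, qN_natCast] at this
    have hn2 : (n : ℚ) ^ 2 ≠ 0 := by positivity
    apply mul_left_cancel₀ hn2
    linear_combination (-1 : ℚ) * this
  obtain ⟨m, hm⟩ := hH.exists_qN_eq_natCast ha hb hh
  have hm1 : m ≠ 1 := by
    rintro rfl
    have hρ' : (n : ℍ[ℚ, -a, -b]) * ρ = n * (k * star h) := by
      rw [hnργ, ← star_mul_mul_of_qN_eq_one (by exact_mod_cast hm) γ, ← hnγ, ← mul_assoc,
        Nat.cast_comm]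
    exact hρ (natCast_mul_left_cancel hn.ne' hρ' ▸ mul_mem hk (hH.star_mem hh))
  have hm0 : m ≠ 0 := by rintro rfl; simp [hm] at hnorm
  rw [hm] at hnorm
  replace hnorm := eq_inv_of_mul_eq_one_left hnorm
  refine ⟨α, hα, -β, neg_mem hβ, ?_, ?_⟩ <;> rw [hnorm]
  · positivity
  · exact inv_lt_one_of_one_lt₀ (by exact_mod_cast (by omega : 1 < m))

end DedekindHasse

theorem stmt_2 (a b : ℚ) (ha : 0 < a) (hb : 0 < b)
    (H : Subring ℍ[ℚ, -a, -b]) (hH : IsOrder a b H) :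
    IsLeftPID a b H ↔
      ∀ ρ : ℍ[ℚ, -a, -b], ρ ∉ H →
        ∃ α ∈ H, ∃ β ∈ H, 0 < qN a b (α * ρ - β) ∧ qN a b (α * ρ - β) < 1 :=
  ⟨satisfiesDedekindHasse_of_isLeftPID ha hb hH, isLeftPID_of_satisfiesDedekindHasse ha hb hH⟩
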